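/- Let V be a weighted digraph with φ_{k-1} - φ_k > φ_k - φ_{k+1}, and let i be a root of some minimal-weight spanning k-forest. Then there exists a minimal-weight spanning k-forest F in which i is a root and the vertex set of the tree of F rooted at i equals the k-attraction domain of i, i.e., the set of all vertices j such that i is accessible from j in at least one minimal-weight spanning k-forest. Moreover, mutually k-attainable marked vertices have equal k-attraction domains. -/

import Mathlib

open Relation

/-- The arc relation of a functional digraph: `F i = some j` means there is an arc `i → j`. -/
def Arc {V : Type*} (F : V → Option V) (i j : V) : Prop := F i = some j

/-- A directed forest: a functional digraph (out-degree ≤ 1) without directed circuits. -/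
def IsForest {V : Type*} (F : V → Option V) : Prop :=
  ∀ i, ¬ Relation.TransGen (Arc F) i i

/-- `j` is accessible from `i` by a directed walk. -/
def Reaches {V : Type*} (F : V → Option V) (i j : V) : Prop :=
  Relation.ReflTransGen (Arc F) i j

open Classical in
/-- The `D`-exchange of `F` by `G`: replace the outgoing arcs (in `F`) of vertices of `D`
by their outgoing arcs in `G`. -/
noncomputable def exchange {V : Type*} (D : Set V) (F G : V → Option V) : V → Option V :=
  fun i => if i ∈ D then G i else F i

/-- The set of vertices of the tree of the forest `F` with root `r`. -/
def treeSet {V : Type*} (F : V → Option V) (r : V) : Set V := {i | Reaches F i r}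

section Weighted

variable {V : Type*} [Fintype V] [DecidableEq V]

/-- A spanning forest of the digraph with arc relation `A`. -/
def IsSpanningForest (A : V → V → Prop) (F : V → Option V) : Prop :=
  IsForest F ∧ ∀ i j, F i = some j → A i j

/-- The number of trees (= roots) of a forest. -/
def numTrees (F : V → Option V) : ℕ :=
  (Finset.univ.filter (fun i => F i = none)).card

/-- The weight of a forest: the sum of the weights of its arcs. -/
noncomputable def weight (w : V → V → ℝ) (F : V → Option V) : ℝ :=
  ∑ i, (F i).elim 0 (w i)

/-- `F` is a minimal-weight (extreme) spanning forest with `k` trees. -/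
def ExtremeForest (A : V → V → Prop) (w : V → V → ℝ) (k : ℕ) (F : V → Option V) : Prop :=
  IsSpanningForest A F ∧ numTrees F = k ∧
    ∀ G, IsSpanningForest A G → numTrees G = k → weight w F ≤ weight w G

/-- `φ_k`: the minimum weight of a spanning forest with exactly `k` trees. -/
noncomputable def phi (A : V → V → Prop) (w : V → V → ℝ) (k : ℕ) : ℝ :=
  sInf (weight w '' {F | IsSpanningForest A F ∧ numTrees F = k})

end Weighted

section Algebras

variable {V : Type*} [Fintype V] [DecidableEq V]

/-- The generating family of `A_k`: vertex sets of trees of minimal-weight spanning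
`k`-forests. -/
def genSets (A : V → V → Prop) (w : V → V → ℝ) (k : ℕ) : Set (Set V) :=
  {S | ∃ F r, ExtremeForest A w k F ∧ F r = none ∧ S = treeSet F r}

/-- The algebra `A_k` of subsets of the vertex set generated by the vertex sets of trees of
minimal-weight spanning `k`-forests. -/
noncomputable def alg (A : V → V → Prop) (w : V → V → ℝ) (k : ℕ) : MeasurableSpace V :=
  MeasurableSpace.generateFrom (genSets A w k)

/-- `E` is an elementary set (atom) of the algebra `m`. -/
def IsElementary (m : MeasurableSpace V) (E : Set V) : Prop :=
  @MeasurableSet V m E ∧ E.Nonempty ∧ ∀ S, @MeasurableSet V m S → S ⊆ E → S = ∅ ∨ S = E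

/-- `i` is a marked vertex of level `k`: a root of some minimal-weight spanning `k`-forest. -/
def IsMarked (A : V → V → Prop) (w : V → V → ℝ) (k : ℕ) (i : V) : Prop :=
  ∃ F, ExtremeForest A w k F ∧ F i = none

end Algebras

/-- The `k`-attraction domain of a vertex `i`: all vertices from which `i` is attainable in
some minimal-weight spanning `k`-forest. -/
def attrDomain {V : Type*} [Fintype V] [DecidableEq V]
    (A : V → V → Prop) (w : V → V → ℝ) (k : ℕ) (i : V) : Set V :=
  {j | ∃ F, ExtremeForest A w k F ∧ Reaches F j i}

/-!
For `D ⊆ V`, the `D`-exchange and the `Dᶜ`-exchange of two forests `F`, `G` together use every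
arc and every root of `F` and of `G` exactly once, so their weights and root counts add up to
those of `F` and `G`. Exchanging along a tree of `G` that contains no root of `F` (one exists when
`F` has fewer trees) gives `φ_{p+1} + φ_{q-1} ≤ φ_p + φ_q` for `p < q`: `φ` is convex.

Now let `F`, `G` be minimal `k`-forests and exchange along the tree of a root `ρ` of `G`. The two
forests obtained have `k + 1 - a` and `k - 1 + a` trees, where `a` is the number of roots of `F`
in that tree, and total weight `2 φ_k`; by convexity and `φ_{k-1} + φ_{k+1} > 2 φ_k` this forces
`a = 1`, and then both are minimal `k`-forests. So the `G`-tree of a root `i` of `F` can be grafted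
onto `F` with `i` remaining a root, and a minimal `k`-forest in which the tree of `i` is largest
contains the whole attraction domain of `i`. Grafting that realized tree of `j` onto a forest in
which `x` reaches `i ∈ attrDomain j` shows `attrDomain i ⊆ attrDomain j`.
-/

section Forests

variable {V : Type*} {F G : V → Option V}

theorem Arc.right_unique {a b c : V} (hb : Arc F a b) (hc : Arc F a c) : b = c :=
  Option.some_injective _ (hb.symm.trans hc)

theorem Reaches.eq_of_root {v t : V} (h : Reaches F v t) (hv : F v = none) : v = t := by
  rcases ReflTransGen.cases_head h with rfl | ⟨c, hc, -⟩
  · rfl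
  · cases hv.symm.trans hc

theorem Reaches.root_eq {v ρ₁ ρ₂ : V} (h₁ : Reaches F v ρ₁) (h₂ : Reaches F v ρ₂)
    (hρ₁ : F ρ₁ = none) (hρ₂ : F ρ₂ = none) : ρ₁ = ρ₂ := by
  rcases ReflTransGen.total_of_right_unique (r := Arc F) (fun _ _ _ => Arc.right_unique) h₁ h₂
    with h | h
  · exact Reaches.eq_of_root h hρ₁
  · exact (Reaches.eq_of_root h hρ₂).symm

theorem Reaches.not_transGen_self {v ρ : V} (h : Reaches F v ρ) (hρ : F ρ = none) :
    ¬ TransGen (Arc F) v v := by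
  intro hv
  have hcycle : ∀ x, Reaches F v x → TransGen (Arc F) x x := fun x hvx => by
    induction hvx with
    | refl => exact hv
    | tail _ hbc ih =>
      obtain ⟨u, hbu, hub⟩ := TransGen.head'_iff.mp ih
      obtain rfl := Arc.right_unique hbc hbu
      exact TransGen.tail' hub hbc
  obtain ⟨u, hρu, -⟩ := TransGen.head'_iff.mp (hcycle ρ h)
  cases hρ.symm.trans hρu

theorem IsForest.exists_root [Finite V] (hF : IsForest F) (v : V) :
    ∃ ρ, Reaches F v ρ ∧ F ρ = none := by
  let r : V → V → Prop := fun a b => TransGen (Arc F) b a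
  have : IsTrans V r := ⟨fun _ _ _ hab hbc => hbc.trans hab⟩
  have : Std.Irrefl r := ⟨hF⟩
  obtain ⟨ρ, hvρ, hmin⟩ :=
    (Finite.wellFounded_of_trans_of_irrefl r).has_min {u | Reaches F v u} ⟨v, .refl⟩
  refine ⟨ρ, hvρ, ?_⟩
  cases hρ : F ρ with
  | none => rfl
  | some u => exact absurd (.single hρ) (hmin u (ReflTransGen.tail hvρ hρ))

theorem isForest_of_forall_exists_root (h : ∀ v, ∃ ρ, Reaches F v ρ ∧ F ρ = none) :
    IsForest F := fun v =>
  let ⟨_, hvρ, hρ⟩ := h v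
  hvρ.not_transGen_self hρ

theorem Reaches.mem_of_predClosed {D : Set V} (hD : ∀ u x, Arc G u x → x ∈ D → u ∈ D)
    {v u : V} (h : Reaches G v u) (hu : u ∈ D) : v ∈ D := by
  induction h with
  | refl => exact hu
  | tail _ hbc ih => exact ih (hD _ _ hbc hu)

end Forests

section Exchange

variable {V : Type*} {D : Set V} {F G : V → Option V}

@[simp]
theorem exchange_of_mem {v : V} (h : v ∈ D) : exchange D F G v = G v := by
  simp [exchange, h]

@[simp]
theorem exchange_of_notMem {v : V} (h : v ∉ D) : exchange D F G v = F v := by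
  simp [exchange, h]

theorem Reaches.exchange_of_path {v t : V} (h : Reaches G v t)
    (hD : ∀ u, Reaches G v u → Reaches G u t → u ≠ t → u ∈ D) :
    Reaches (exchange D F G) v t := by
  induction h using ReflTransGen.head_induction_on with
  | refl => exact .refl
  | @head a c hac hct ih =>
    by_cases hat : a = t
    · subst hat; exact .refl
    · have haD : a ∈ D := hD a .refl (.head hac hct) hat
      refine .head (show exchange D F G a = some c by rw [exchange_of_mem haD]; exact hac) ?_
      exact ih fun u hcu hut => hD u (.head hac hcu) hut

theorem Reaches.exchange_or {y z : V} (h : Reaches F y z) :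
    Reaches (exchange D F G) y z ∨ ∃ d ∈ D, Reaches (exchange D F G) y d := by
  induction h using ReflTransGen.head_induction_on with
  | refl => exact .inl .refl
  | @head a c hac _ ih =>
    by_cases haD : a ∈ D
    · exact .inr ⟨a, haD, .refl⟩
    · have : Arc (exchange D F G) a c := by
        show exchange D F G a = some c
        rw [exchange_of_notMem haD]; exact hac
      exact ih.imp (.head this) fun ⟨d, hd, hcd⟩ => ⟨d, hd, .head this hcd⟩

theorem Reaches.exchange_of_forall_mem {y z t : V} (h : Reaches F y z)
    (hD : ∀ d ∈ D, Reaches (exchange D F G) d t) (hz : Reaches (exchange D F G) z t) :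
    Reaches (exchange D F G) y t := by
  rcases h.exchange_or with hyz | ⟨d, hd, hyd⟩
  · exact hyz.trans hz
  · exact hyd.trans (hD d hd)

theorem isForest_exchange [Finite V] (hF : IsForest F)
    (hD : ∀ v ∈ D, ∃ ρ, Reaches (exchange D F G) v ρ ∧ exchange D F G ρ = none) :
    IsForest (exchange D F G) := by
  refine isForest_of_forall_exists_root fun v => ?_
  obtain ⟨ρ, hvρ, hρ⟩ := hF.exists_root v
  rcases hvρ.exchange_or (D := D) (G := G) with hvρ | ⟨d, hd, hvd⟩
  · by_cases hρD : ρ ∈ D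
    · obtain ⟨σ, hρσ, hσ⟩ := hD ρ hρD
      exact ⟨σ, hvρ.trans hρσ, hσ⟩
    · exact ⟨ρ, hvρ, by rw [exchange_of_notMem hρD]; exact hρ⟩
  · obtain ⟨σ, hdσ, hσ⟩ := hD d hd
    exact ⟨σ, hvd.trans hdσ, hσ⟩

theorem isForest_exchange_compl [Finite V] (hF : IsForest F) (hG : IsForest G)
    (hD : ∀ u x, Arc G u x → x ∈ D → u ∈ D) : IsForest (exchange Dᶜ F G) := by
  refine isForest_exchange hF fun v hv => ?_
  obtain ⟨ρ, hvρ, hρ⟩ := hG.exists_root v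
  have hout : ∀ u, Reaches G v u → u ∈ Dᶜ := fun u hvu hu => hv (hvu.mem_of_predClosed hD hu)
  exact ⟨ρ, hvρ.exchange_of_path fun u hvu _ _ => hout u hvu,
    by rw [exchange_of_mem (hout ρ hvρ)]; exact hρ⟩

theorem isSpanningForest_exchange {A : V → V → Prop} (hF : IsSpanningForest A F)
    (hG : IsSpanningForest A G) (h : IsForest (exchange D F G)) : IsSpanningForest A (exchange D F G) := by
  refine ⟨h, fun i j hij => ?_⟩
  by_cases hi : i ∈ D
  · rw [exchange_of_mem hi] at hij; exact hG.2 i j hij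
  · rw [exchange_of_notMem hi] at hij; exact hF.2 i j hij

def rootSet (F : V → Option V) : Set V := {v | F v = none}

theorem rootSet_exchange (D : Set V) (F G : V → Option V) :
    rootSet (exchange D F G) = rootSet G ∩ D ∪ rootSet F \ D := by
  ext v
  by_cases hv : v ∈ D <;> simp [rootSet, hv]

theorem mem_treeSet_of_arc {ρ : V} : ∀ u x, Arc G u x → x ∈ treeSet G ρ → u ∈ treeSet G ρ :=
  fun _ _ hux hx => ReflTransGen.head hux hx

theorem Reaches.exchange_treeSet {v ρ : V} (h : Reaches G v ρ) :
    Reaches (exchange (treeSet G ρ) F G) v ρ :=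
  h.exchange_of_path fun _ _ hu _ => hu

theorem isForest_exchange_treeSet [Finite V] (hF : IsForest F) {ρ : V} (hρ : G ρ = none) :
    IsForest (exchange (treeSet G ρ) F G) :=
  isForest_exchange hF fun _ hv => ⟨ρ, Reaches.exchange_treeSet hv,
    by rw [exchange_of_mem (show ρ ∈ treeSet G ρ from .refl)]; exact hρ⟩

end Exchange

section Counting

variable {V : Type*} [Fintype V] {F G : V → Option V}

theorem numTrees_eq_ncard (F : V → Option V) : numTrees F = (rootSet F).ncard := by
  rw [numTrees, ← Set.ncard_coe_finset]
  congr
  ext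
  simp [rootSet]

theorem numTrees_exchange (D : Set V) (F G : V → Option V) :
    numTrees (exchange D F G) = (rootSet G ∩ D).ncard + (rootSet F \ D).ncard := by
  rw [numTrees_eq_ncard, rootSet_exchange,
    Set.ncard_union_eq (Set.disjoint_sdiff_right.mono_left Set.inter_subset_right)]

theorem numTrees_exchange_add_compl (D : Set V) (F G : V → Option V) :
    numTrees (exchange D F G) + numTrees (exchange Dᶜ F G) = numTrees F + numTrees G := by
  rw [numTrees_exchange, numTrees_exchange, numTrees_eq_ncard F, numTrees_eq_ncard G,
    ← Set.ncard_inter_add_ncard_sdiff_eq_ncard (rootSet F) D,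
    ← Set.ncard_inter_add_ncard_sdiff_eq_ncard (rootSet G) D, Set.sdiff_compl, ← Set.sdiff_eq]
  ring

theorem numTrees_exchange_treeSet {ρ : V} (hρ : G ρ = none) :
    numTrees (exchange (treeSet G ρ) F G) = (rootSet F \ treeSet G ρ).ncard + 1 := by
  have : rootSet G ∩ treeSet G ρ = {ρ} := by
    ext v
    exact ⟨fun ⟨hv, hvρ⟩ => Reaches.eq_of_root hvρ hv, by rintro rfl; exact ⟨hρ, .refl⟩⟩
  rw [numTrees_exchange, this, Set.ncard_singleton, add_comm]

theorem weight_exchange_add_compl (w : V → V → ℝ) (D : Set V) (F G : V → Option V) :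
    weight w (exchange D F G) + weight w (exchange Dᶜ F G) = weight w F + weight w G := by
  simp only [weight, ← Finset.sum_add_distrib]
  refine Finset.sum_congr rfl fun v _ => ?_
  by_cases hv : v ∈ D
  · rw [exchange_of_mem hv, exchange_of_notMem (Set.notMem_compl_iff.mpr hv), add_comm]
  · rw [exchange_of_notMem hv, exchange_of_mem (Set.mem_compl hv)]

theorem IsForest.exists_root_forall_not_reaches (hG : IsForest G)
    (h : numTrees F < numTrees G) : ∃ ρ, G ρ = none ∧ ∀ r, F r = none → ¬ Reaches G r ρ := by
  by_contra! hcover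
  choose root hroot using hG.exists_root
  have hsub : rootSet G ⊆ root '' rootSet F := fun ρ hρ => by
    obtain ⟨r, hr, hrρ⟩ := hcover ρ hρ
    exact ⟨r, hr, Reaches.root_eq (hroot r).1 hrρ (hroot r).2 hρ⟩
  have := (Set.ncard_le_ncard hsub).trans (Set.ncard_image_le (f := root))
  rw [numTrees_eq_ncard, numTrees_eq_ncard] at h
  omega

end Counting

section Weights

variable {V : Type*} [Fintype V] {A : V → V → Prop} {w : V → V → ℝ} {k : ℕ} {D : Set V}
  {F G : V → Option V}

theorem phi_le_weight (hF : IsSpanningForest A F) : phi A w (numTrees F) ≤ weight w F :=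
  csInf_le ((Set.toFinite _).image _).bddBelow ⟨F, ⟨hF, rfl⟩, rfl⟩

theorem ExtremeForest.weight_eq (hF : ExtremeForest A w k F) : weight w F = phi A w k := by
  obtain ⟨hFs, rfl, hmin⟩ := hF
  refine le_antisymm (le_csInf ⟨_, F, ⟨hFs, rfl⟩, rfl⟩ ?_) (phi_le_weight hFs)
  rintro _ ⟨G, ⟨hGs, hGk⟩, rfl⟩
  exact hmin G hGs hGk

theorem extremeForest_of_weight_le (hF : IsSpanningForest A F) (hk : numTrees F = k)
    (h : weight w F ≤ phi A w k) : ExtremeForest A w k F :=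
  ⟨hF, hk, fun _ hG hGk => h.trans (hGk ▸ phi_le_weight hG)⟩

theorem extremeForest_exchange (hF : ExtremeForest A w k F) (hG : ExtremeForest A w k G)
    (h₁ : IsForest (exchange D F G)) (h₂ : IsForest (exchange Dᶜ F G))
    (hk : numTrees (exchange D F G) = k) : ExtremeForest A w k (exchange D F G) := by
  have hk₂ : numTrees (exchange Dᶜ F G) = k := by
    have := numTrees_exchange_add_compl D F G
    rw [hF.2.1, hG.2.1] at this
    omega
  have hphi := hk₂ ▸ phi_le_weight (w := w) (isSpanningForest_exchange hF.1 hG.1 h₂)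
  have hsum := weight_exchange_add_compl w D F G
  rw [hF.weight_eq, hG.weight_eq] at hsum
  exact extremeForest_of_weight_le (isSpanningForest_exchange hF.1 hG.1 h₁) hk (by linarith)

theorem exists_exchange_numTrees_succ (hF : IsSpanningForest A F) (hG : IsSpanningForest A G)
    (h : numTrees F < numTrees G) :
    ∃ F' G', IsSpanningForest A F' ∧ IsSpanningForest A G' ∧ numTrees F' = numTrees F + 1 ∧
      numTrees F' + numTrees G' = numTrees F + numTrees G ∧
      weight w F' + weight w G' = weight w F + weight w G := by
  obtain ⟨ρ, hρ, hfree⟩ := hG.1.exists_root_forall_not_reaches h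
  refine ⟨exchange (treeSet G ρ) F G, exchange (treeSet G ρ)ᶜ F G,
    isSpanningForest_exchange hF hG (isForest_exchange_treeSet hF.1 hρ),
    isSpanningForest_exchange hF hG (isForest_exchange_compl hF.1 hG.1 mem_treeSet_of_arc),
    ?_, numTrees_exchange_add_compl _ F G, weight_exchange_add_compl w _ F G⟩
  have hdisj : Disjoint (rootSet F) (treeSet G ρ) := Set.disjoint_left.mpr hfree
  rw [numTrees_exchange_treeSet hρ, numTrees_eq_ncard F, hdisj.sdiff_eq_left]

theorem phi_add_phi_le_weight_add_weight (m : ℕ) (hF : IsSpanningForest A F)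
    (hG : IsSpanningForest A G) (h : numTrees G = numTrees F + 2 * m + 2) :
    phi A w (numTrees F + m) + phi A w (numTrees F + m + 2) ≤ weight w F + weight w G := by
  induction m generalizing F G with
  | zero => simpa [h] using add_le_add (phi_le_weight (w := w) hF) (phi_le_weight (w := w) hG)
  | succ m ih =>
    obtain ⟨F', G', hF', hG', hF't, hsum, hw⟩ :=
      exists_exchange_numTrees_succ (w := w) hF hG (by omega)
    have := ih hF' hG' (by omega)
    rwa [hw, hF't, add_right_comm (numTrees F) 1 m] at this

theorem phi_pred_add_phi_succ_le (hF : IsSpanningForest A F) (hG : IsSpanningForest A G)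
    (hsum : numTrees F + numTrees G = 2 * k) (hne : numTrees F ≠ numTrees G) :
    phi A w (k - 1) + phi A w (k + 1) ≤ weight w F + weight w G := by
  wlog hlt : numTrees F < numTrees G generalizing F G
  · rw [add_comm (weight w F)]
    exact this hG hF (by omega) hne.symm (by omega)
  have h := phi_add_phi_le_weight_add_weight (w := w) (k - 1 - numTrees F) hF hG (by omega)
  rwa [show numTrees F + (k - 1 - numTrees F) = k - 1 by omega,
    show k - 1 + 2 = k + 1 by omega] at h

theorem ncard_rootSet_inter_treeSet_eq_one
    (hlt : phi A w (k - 1) - phi A w k > phi A w k - phi A w (k + 1))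
    (hF : ExtremeForest A w k F) (hG : ExtremeForest A w k G) {ρ : V} (hρ : G ρ = none) :
    (rootSet F ∩ treeSet G ρ).ncard = 1 := by
  by_contra hne
  have h₁ := isSpanningForest_exchange hF.1 hG.1 (isForest_exchange_treeSet hF.1.1 hρ)
  have h₂ := isSpanningForest_exchange hF.1 hG.1
    (isForest_exchange_compl hF.1.1 hG.1.1 (mem_treeSet_of_arc (ρ := ρ)))
  have hp := numTrees_exchange_treeSet (F := F) hρ
  have htot := numTrees_exchange_add_compl (treeSet G ρ) F G
  have hsplit := Set.ncard_inter_add_ncard_sdiff_eq_ncard (rootSet F) (treeSet G ρ)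
  rw [← numTrees_eq_ncard, hF.2.1] at hsplit
  rw [hF.2.1, hG.2.1] at htot
  have := phi_pred_add_phi_succ_le (w := w) (k := k) h₁ h₂ (by omega) (by omega)
  rw [weight_exchange_add_compl, hF.weight_eq, hG.weight_eq] at this
  linarith

theorem extremeForest_exchange_treeSet
    (hlt : phi A w (k - 1) - phi A w k > phi A w k - phi A w (k + 1))
    (hF : ExtremeForest A w k F) (hG : ExtremeForest A w k G) {ρ : V} (hρ : G ρ = none) :
    ExtremeForest A w k (exchange (treeSet G ρ) F G) := by
  refine extremeForest_exchange hF hG (isForest_exchange_treeSet hF.1.1 hρ)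
    (isForest_exchange_compl hF.1.1 hG.1.1 mem_treeSet_of_arc) ?_
  have hsplit := Set.ncard_inter_add_ncard_sdiff_eq_ncard (rootSet F) (treeSet G ρ)
  rw [← numTrees_eq_ncard, hF.2.1, ncard_rootSet_inter_treeSet_eq_one hlt hF hG hρ] at hsplit
  rw [numTrees_exchange_treeSet hρ]
  omega

theorem exists_extremeForest_treeSet_union_subset
    (hlt : phi A w (k - 1) - phi A w k > phi A w k - phi A w (k + 1))
    {i : V} (hF : ExtremeForest A w k F) (hFi : F i = none) (hG : ExtremeForest A w k G) :
    ∃ X, ExtremeForest A w k X ∧ X i = none ∧ treeSet F i ∪ treeSet G i ⊆ treeSet X i := by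
  set D := treeSet G i \ {i}
  obtain ⟨ρ, hiρ, hρ⟩ := hG.1.1.exists_root i
  obtain ⟨r, hr⟩ := Set.ncard_eq_one.mp (ncard_rootSet_inter_treeSet_eq_one hlt hF hG hρ)
  have hFroot : ∀ v ∈ treeSet G i, F v = none → v = i := fun v hv hvF => by
    have hv' : v ∈ rootSet F ∩ treeSet G ρ := ⟨hvF, hv.trans hiρ⟩
    have hi' : i ∈ rootSet F ∩ treeSet G ρ := ⟨hFi, hiρ⟩
    rw [hr] at hv' hi'
    exact hv'.trans hi'.symm
  have hiD : i ∉ D := fun h => h.2 rfl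
  have hDi : ∀ v ∈ D, Reaches (exchange D F G) v i := fun _ hv =>
    Reaches.exchange_of_path hv.1 fun u _ hu hui => ⟨hu, hui⟩
  have hXi : exchange D F G i = none := by rw [exchange_of_notMem hiD]; exact hFi
  have hX : IsForest (exchange D F G) := isForest_exchange hF.1.1 fun v hv => ⟨i, hDi v hv, hXi⟩
  have hpred : ∀ u x, Arc G u x → x ∈ D → u ∈ D := fun u x hux hx =>
    ⟨.head hux hx.1, by rintro rfl; exact hG.1.1 u (TransGen.head' hux hx.1)⟩
  have hcount : numTrees (exchange D F G) = k := by
    have hG0 : rootSet G ∩ D = ∅ := Set.eq_empty_of_forall_notMem fun v ⟨hvG, hvD⟩ =>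
      hvD.2 (Reaches.eq_of_root hvD.1 hvG)
    have hF0 : rootSet F \ D = rootSet F :=
      Disjoint.sdiff_eq_left (Set.disjoint_left.mpr fun v hvF hvD => hvD.2 (hFroot v hvD.1 hvF))
    rw [numTrees_exchange, hG0, hF0, Set.ncard_empty, zero_add, ← numTrees_eq_ncard, hF.2.1]
  refine ⟨_, extremeForest_exchange hF hG hX (isForest_exchange_compl hF.1.1 hG.1.1 hpred) hcount,
    hXi, ?_⟩
  rintro v (hv | hv)
  · exact Reaches.exchange_of_forall_mem hv hDi .refl
  · exact Reaches.exchange_of_path hv fun u _ hu hui => ⟨hu, hui⟩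

variable [DecidableEq V]

theorem exists_extremeForest_treeSet_eq_attrDomain
    (hlt : phi A w (k - 1) - phi A w k > phi A w k - phi A w (k + 1))
    {i : V} (hi : IsMarked A w k i) :
    ∃ F, ExtremeForest A w k F ∧ F i = none ∧ treeSet F i = attrDomain A w k i := by
  obtain ⟨F, ⟨hF, hFi⟩, hmax⟩ := Set.exists_max_image {F | ExtremeForest A w k F ∧ F i = none}
    (fun F => (treeSet F i).ncard) (Set.toFinite _) hi
  refine ⟨F, hF, hFi, Set.Subset.antisymm (fun j hj => ⟨F, hF, hj⟩) ?_⟩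
  rintro j ⟨G, hG, hji⟩
  obtain ⟨X, hX, hXi, hsub⟩ := exists_extremeForest_treeSet_union_subset hlt hF hFi hG
  have : treeSet F i = treeSet X i :=
    Set.eq_of_subset_of_ncard_le (Set.subset_union_left.trans hsub) (hmax X ⟨hX, hXi⟩)
  exact this ▸ hsub (Or.inr hji)

theorem attrDomain_subset_of_mem
    (hlt : phi A w (k - 1) - phi A w k > phi A w k - phi A w (k + 1))
    {i j : V} (hj : IsMarked A w k j) (hij : i ∈ attrDomain A w k j) :
    attrDomain A w k i ⊆ attrDomain A w k j := by
  obtain ⟨G, hG, hGj, hGdom⟩ := exists_extremeForest_treeSet_eq_attrDomain hlt hj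
  have hiG : i ∈ treeSet G j := hGdom ▸ hij
  rintro x ⟨H, hH, hxi⟩
  exact ⟨_, extremeForest_exchange_treeSet hlt hH hG hGj, Reaches.exchange_of_forall_mem hxi
    (fun _ hd => Reaches.exchange_treeSet hd) (Reaches.exchange_treeSet hiG)⟩

end Weights

theorem attraction_domain_realized_general {V : Type*} [Fintype V] [DecidableEq V]
    (A : V → V → Prop) (w : V → V → ℝ) (k : ℕ)
    (hlt : phi A w (k - 1) - phi A w k > phi A w k - phi A w (k + 1))
    (i : V) (hi : IsMarked A w k i) :
    (∃ F, ExtremeForest A w k F ∧ F i = none ∧ treeSet F i = attrDomain A w k i) ∧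
      ∀ j, IsMarked A w k j →
        (∃ F, ExtremeForest A w k F ∧ Reaches F i j) →
        (∃ G, ExtremeForest A w k G ∧ Reaches G j i) →
        attrDomain A w k i = attrDomain A w k j :=
  ⟨exists_extremeForest_treeSet_eq_attrDomain hlt hi, fun _ hj hij hji =>
    (attrDomain_subset_of_mem hlt hj hij).antisymm (attrDomain_subset_of_mem hlt hi hji)⟩

/-- Under the strict convexity inequality, for every marked vertex `i` there is a
minimal-weight spanning `k`-forest in which `i` is a root and the vertex set of its tree is
the `k`-attraction domain of `i`; mutually `k`-attainable marked vertices have equal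
`k`-attraction domains. -/
theorem attraction_domain_realized {V : Type*} [Fintype V] [DecidableEq V]
    (A : V → V → Prop) (w : V → V → ℝ) (k : ℕ)
    (hk : 2 ≤ k) (hk' : k + 1 ≤ Fintype.card V)
    (hEx : ∃ F, IsSpanningForest A F ∧ numTrees F = k - 1)
    (hlt : phi A w (k - 1) - phi A w k > phi A w k - phi A w (k + 1))
    (i : V) (hi : IsMarked A w k i) :
    (∃ F, ExtremeForest A w k F ∧ F i = none ∧ treeSet F i = attrDomain A w k i) ∧
      ∀ j, IsMarked A w k j →
        (∃ F, ExtremeForest A w k F ∧ Reaches F i j) →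
        (∃ G, ExtremeForest A w k G ∧ Reaches G j i) →
        attrDomain A w k i = attrDomain A w k j :=
  attraction_domain_realized_general A w k hlt i hi
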